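/- For n ≥ 0 and positive rational x, q^x β_n(x) = ζ_q(1−n, x)(q − (n+1)q²); explicitly, q^x β_n(x) = Σ_{k≥0} [k+x]^{n−1}(q^{k+x} − (n+1) q^{2(k+x)}). -/

import Mathlib

/-! With `z = q^x` and `u = [x] = (z - 1)/(q - 1)` one has `[x + 1] = z + u`, so the binomial
theorem turns `β_n(x + 1)` into the umbral sums `Σ_i C(m,i) q^i β_i`, which the Carlitz recurrence
evaluates. This yields the `q`-difference equation
`q^x β_n(x) - q^{x+1} β_n(x + 1) = [x]^{n-1} (q^x - (n+1) q^{2x})`.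
Summing it over `x, x + 1, x + 2, …` telescopes to `q^x β_n(x)`, because `z β_n(z) = z · O(1)`
and `q^k z → 0`. -/

open Finset

/-- The quantum number `[y] = (q^y − 1)/(q − 1)` for a real exponent `y` (via `rpow`). -/
noncomputable def qNumR (q y : ℝ) : ℝ := (q ^ y - 1) / (q - 1)

/-- The Hurwitz `q`-Zeta operator at the exponent `s = 1 − n`:
`ζ_q(1−n, x) f (q) = Σ_{k≥0} [k+x]^{n−1} f(q^{k+x})`. -/
noncomputable def hurwitzZetaQR (q : ℝ) (n : ℕ) (x : ℝ) (f : ℝ → ℝ) : ℝ :=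
  ∑' k : ℕ, qNumR q ((k : ℝ) + x) ^ ((n : ℤ) - 1) * f (q ^ ((k : ℝ) + x))

theorem sum_choose_mul_pow_mul_add_pow {R : Type*} [CommSemiring R] (c : ℕ → R) (z u : R)
    (n : ℕ) :
    ∑ i ∈ range (n + 1), (n.choose i : R) * c i * z ^ i * (z + u) ^ (n - i) =
      ∑ m ∈ range (n + 1),
        (n.choose m : R) * z ^ m * u ^ (n - m) * ∑ i ∈ range (m + 1), (m.choose i : R) * c i := by
  have expand : ∀ i ∈ range (n + 1), (n.choose i : R) * c i * z ^ i * (z + u) ^ (n - i) =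
      ∑ m ∈ Ico i (n + 1), (n.choose m : R) * z ^ m * u ^ (n - m) * ((m.choose i : R) * c i) := by
    intro i hi
    have hin : i ≤ n := Nat.lt_succ_iff.mp (mem_range.mp hi)
    rw [sum_Ico_eq_sum_range, add_pow, mul_sum, show n + 1 - i = n - i + 1 by omega]
    refine sum_congr rfl fun j hj => ?_
    have hj : j ≤ n - i := Nat.lt_succ_iff.mp (mem_range.mp hj)
    have hchoose := Nat.choose_mul (n := n) (k := i + j) (s := i) (by omega)
    rw [Nat.add_sub_cancel_left] at hchoose
    rw [show n - (i + j) = n - i - j by omega, pow_add]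
    calc _ = (↑(n.choose i * (n - i).choose j) : R) * z ^ i * z ^ j * u ^ (n - i - j) * c i := by
            push_cast; ring
      _ = _ := by rw [← hchoose]; push_cast; ring
  simp_rw [sum_congr rfl expand, mul_sum, range_eq_Ico]
  exact sum_Ico_Ico_comm 0 (n + 1) _

theorem hasSum_sub_succ {G : Type*} [AddCommGroup G] [TopologicalSpace G]
    [IsTopologicalAddGroup G] [T2Space G] {f : ℕ → G} (hf : Summable f) :
    HasSum (fun k => f k - f (k + 1)) (f 0) := by
  have h := hf.hasSum.sub ((summable_nat_add_iff 1).mpr hf).hasSum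
  rwa [hf.tsum_eq_zero_add, add_sub_cancel_right] at h

theorem summable_pow_mul_of_isBounded {r : ℝ} (hr0 : 0 ≤ r) (hr1 : r < 1) {b : ℕ → ℝ}
    (hb : Bornology.IsBounded (Set.range b)) : Summable (fun k => r ^ k * b k) := by
  obtain ⟨C, hC⟩ := hb.exists_norm_le
  refine Summable.of_norm_bounded ((summable_geometric_of_lt_one hr0 hr1).mul_right C) fun k => ?_
  rw [norm_mul, norm_pow, Real.norm_of_nonneg hr0]
  exact mul_le_mul_of_nonneg_left (hC _ ⟨k, rfl⟩) (pow_nonneg hr0 k)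

theorem hasSum_pow_mul_sub_pow_succ_mul {G : ℝ → ℝ} (hG : ContinuousAt G 0) {r : ℝ}
    (hr0 : 0 ≤ r) (hr1 : r < 1) (z : ℝ) :
    HasSum (fun k : ℕ => r ^ k * z * G (r ^ k * z) - r ^ (k + 1) * z * G (r ^ (k + 1) * z))
      (z * G z) := by
  have hlim : Filter.Tendsto (fun k : ℕ => z * G (r ^ k * z)) Filter.atTop (nhds (z * G 0)) := by
    have h := (tendsto_pow_atTop_nhds_zero_of_lt_one hr0 hr1).mul_const z
    rw [zero_mul] at h
    exact (hG.tendsto.comp h).const_mul z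
  have hf := summable_pow_mul_of_isBounded hr0 hr1 (Metric.isBounded_range_of_tendsto _ hlim)
  simpa [mul_assoc] using hasSum_sub_succ hf

section BernoulliCarlitz

variable {K : Type*} [Field K]

/-- The Carlitz recurrence `β_0 = 1`, `q (qβ + 1)^m - β_m = [m = 1]` for `m ≥ 1`,
with `(qβ + 1)^m` read umbrally as `Σ_i C(m,i) q^i β_i`. -/
def IsBernoulliCarlitz (q : K) (β : ℕ → K) : Prop :=
  β 0 = 1 ∧ ∀ m : ℕ, 1 ≤ m →
    q * (∑ i ∈ range (m + 1), (m.choose i : K) * q ^ i * β i) - β m = if m = 1 then 1 else 0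

/-- `β_n(x)` as a function of `z = q^x`, where `[x] = (z - 1)/(q - 1)`. -/
noncomputable def bernoulliCarlitzPoly (q : K) (β : ℕ → K) (n : ℕ) (z : K) : K :=
  ∑ i ∈ range (n + 1), (n.choose i : K) * z ^ i * β i * ((z - 1) / (q - 1)) ^ (n - i)

variable {q : K} {β : ℕ → K}

theorem IsBernoulliCarlitz.mul_sum_choose (hβ : IsBernoulliCarlitz q β) (m : ℕ) :
    q * ∑ i ∈ range (m + 1), (m.choose i : K) * (q ^ i * β i) =
      β m + ((if m = 0 then q - 1 else 0) + if m = 1 then 1 else 0) := by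
  rcases Nat.eq_zero_or_pos m with rfl | hm
  · simp [hβ.1]
  · rw [if_neg hm.ne', zero_add, ← hβ.2 m hm]
    simp only [mul_assoc]
    ring

theorem IsBernoulliCarlitz.mul_bernoulliCarlitzPoly_mul_left (hβ : IsBernoulliCarlitz q β)
    (hq : q ≠ 1) (n : ℕ) (z : K) :
    q * z * bernoulliCarlitzPoly q β n (q * z) =
      z * bernoulliCarlitzPoly q β n z + n * z ^ 2 * ((z - 1) / (q - 1)) ^ (n - 1)
        + (q - 1) * z * ((z - 1) / (q - 1)) ^ n := by
  have hqz : (q * z - 1) / (q - 1) = z + (z - 1) / (q - 1) := by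
    field_simp [sub_ne_zero.mpr hq]
    ring
  set u := (z - 1) / (q - 1)
  have hcorr : ∑ m ∈ range (n + 1), (n.choose m : K) * z ^ m * u ^ (n - m) *
      ((if m = 0 then q - 1 else 0) + if m = 1 then 1 else 0) =
        (q - 1) * u ^ n + n * z * u ^ (n - 1) := by
    simp only [mul_add, mul_ite, mul_zero, sum_add_distrib, sum_ite_eq', mem_range]
    rcases n with _ | n <;> simp [mul_comm]
  calc q * z * bernoulliCarlitzPoly q β n (q * z)
      = z * (q * ∑ i ∈ range (n + 1),
          (n.choose i : K) * (q ^ i * β i) * z ^ i * (z + u) ^ (n - i)) := by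
        simp only [bernoulliCarlitzPoly, hqz, mul_sum]
        exact sum_congr rfl fun i _ => by ring
    _ = z * ∑ m ∈ range (n + 1), (n.choose m : K) * z ^ m * u ^ (n - m) *
          (β m + ((if m = 0 then q - 1 else 0) + if m = 1 then 1 else 0)) := by
        rw [sum_choose_mul_pow_mul_add_pow, mul_sum]
        simp only [← hβ.mul_sum_choose]
        congr 1
        exact sum_congr rfl fun m _ => by ring
    _ = z * (bernoulliCarlitzPoly q β n z + ((q - 1) * u ^ n + n * z * u ^ (n - 1))) := by
        rw [← hcorr, bernoulliCarlitzPoly, ← sum_add_distrib]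
        congr 1
        exact sum_congr rfl fun m _ => by ring
    _ = _ := by ring

theorem IsBernoulliCarlitz.mul_bernoulliCarlitzPoly_sub_mul_left (hβ : IsBernoulliCarlitz q β)
    (hq : q ≠ 1) (n : ℕ) {z : K} (hz : z ≠ 1) :
    z * bernoulliCarlitzPoly q β n z - q * z * bernoulliCarlitzPoly q β n (q * z) =
      ((z - 1) / (q - 1)) ^ ((n : ℤ) - 1) * (z - (n + 1) * z ^ 2) := by
  have hq' : q - 1 ≠ 0 := sub_ne_zero.mpr hq
  have hz' : z - 1 ≠ 0 := sub_ne_zero.mpr hz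
  rw [hβ.mul_bernoulliCarlitzPoly_mul_left hq]
  rcases n with _ | n
  · simp only [CharP.cast_eq_zero, zero_sub, zpow_neg_one, inv_div, pow_zero]
    field_simp
    ring
  · rw [show ((n + 1 : ℕ) : ℤ) - 1 = n by push_cast; ring, zpow_natCast, Nat.add_sub_cancel,
      pow_succ]
    push_cast
    linear_combination (-z * ((z - 1) / (q - 1)) ^ n) * mul_div_cancel₀ (z - 1) hq'

theorem continuous_bernoulliCarlitzPoly [TopologicalSpace K] [IsTopologicalRing K] (q : K)
    (β : ℕ → K) (n : ℕ) : Continuous (bernoulliCarlitzPoly q β n) := by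
  unfold bernoulliCarlitzPoly
  fun_prop

end BernoulliCarlitz

/-- for `n ≥ 0` and positive rational `x`,
`q^x β_n(x) = ζ_q(1−n, x)(q − (n+1)q²) = Σ_{k≥0} [k+x]^{n−1}(q^{k+x} − (n+1) q^{2(k+x)})`,
where `β_n(x) = Σ_{i=0}^n C(n,i) q^{ix} β_i [x]^{n−i}` and `β_i` are the
Bernoulli–Carlitz fractions. -/
theorem qBernoullipoly_eq_hurwitzZetaQ (q : ℝ) (hq : q ∈ Set.Ioo (0 : ℝ) 1)
    (β : ℕ → ℝ) (h0 : β 0 = 1)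
    (hrec : ∀ m : ℕ, 1 ≤ m →
      q * (∑ i ∈ Finset.range (m + 1), (m.choose i : ℝ) * q ^ i * β i) - β m
        = if m = 1 then 1 else 0)
    (n : ℕ) (x : ℚ) (hx : 0 < x) :
    q ^ (x : ℝ) * (∑ i ∈ Finset.range (n + 1),
        (n.choose i : ℝ) * q ^ ((i : ℝ) * x) * β i * qNumR q x ^ (n - i)) =
      hurwitzZetaQR q n x (fun y => y - ((n : ℝ) + 1) * y ^ 2) := by
  obtain ⟨hq0, hq1⟩ := hq
  have hβ : IsBernoulliCarlitz q β := ⟨h0, hrec⟩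
  set z := q ^ (x : ℝ)
  have hz1 : z < 1 := Real.rpow_lt_one hq0.le hq1 (by exact_mod_cast hx)
  have hlhs : (∑ i ∈ Finset.range (n + 1),
      (n.choose i : ℝ) * q ^ ((i : ℝ) * x) * β i * qNumR q x ^ (n - i)) =
        bernoulliCarlitzPoly q β n z := by
    refine sum_congr rfl fun i _ => ?_
    rw [mul_comm (i : ℝ), Real.rpow_mul hq0.le, Real.rpow_natCast]
    rfl
  have hterm : ∀ k : ℕ, qNumR q ((k : ℝ) + x) ^ ((n : ℤ) - 1) *
      (q ^ ((k : ℝ) + x) - ((n : ℝ) + 1) * (q ^ ((k : ℝ) + x)) ^ 2) =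
        q ^ k * z * bernoulliCarlitzPoly q β n (q ^ k * z) -
          q ^ (k + 1) * z * bernoulliCarlitzPoly q β n (q ^ (k + 1) * z) := by
    intro k
    have hk : q ^ ((k : ℝ) + x) = q ^ k * z := by rw [Real.rpow_add hq0, Real.rpow_natCast]
    have hk1 : q ^ k * z ≠ 1 :=
      (mul_lt_one_of_nonneg_of_lt_one_right (pow_le_one₀ hq0.le hq1.le)
        (Real.rpow_nonneg hq0.le _) hz1).ne
    rw [qNumR, hk, ← hβ.mul_bernoulliCarlitzPoly_sub_mul_left hq1.ne n hk1, pow_succ]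
    ring_nf
  rw [hlhs, hurwitzZetaQR]
  simp only [hterm]
  exact ((hasSum_pow_mul_sub_pow_succ_mul
    (continuous_bernoulliCarlitzPoly q β n).continuousAt hq0.le hq1 z).tsum_eq).symm
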